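/- arXiv:1011.4284 — 3 statements merged into one kernel-verified Lean document; each statement's English description precedes it below -/
import Mathlib

section
/- Let Q be a strictly positive self-adjoint operator on H and b ∈ B(H). For x, y in the domain of Q, the function f(z) := ⟨Q^{i(z̄ − i)} x, b* Q^{iz} y⟩ is well-defined, bounded, and continuous on the closed strip {z ∈ ℂ : −1 ≤ Im z ≤ 0}, and holomorphic in its interior; for real t, f(t) = ⟨Qx, Q^{-it} b* Q^{it} y⟩ and f(t − i) = ⟨x, Q^{-it} b* Q^{it} Q y⟩. -/
/-!
Writing `L = log Q` (continuous functional calculus), the powers are `Q ^ w = exp (w • L)` with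
`L` self-adjoint, so moving `Q ^ {i(z̄ - i)}` across the inner product turns `f` into
`z ↦ ⟪x, (exp ((1 - iz) • L) * b* * exp (iz • L)) y⟫`, which is entire. Since `exp (is • L)` is
unitary for real `s`, `‖exp (w • L)‖` depends only on `Re w`; on the strip both real parts
`1 + Im z` and `-Im z` lie in `[0, 1]`, so compactness of `[0, 1]` bounds `f`. The boundary values
come from `Q ^ (v + w) = Q ^ v * Q ^ w` and `Q ^ 1 = Q`.
-/

open Complex NormedSpace

section BanachAlgebra

variable {𝔸 : Type*} [NormedRing 𝔸] [NormedAlgebra ℂ 𝔸] [CompleteSpace 𝔸]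

theorem exp_add_smul (a : 𝔸) (v w : ℂ) : exp ((v + w) • a) = exp (v • a) * exp (w • a) := by
  let +nondep : NormedAlgebra ℚ 𝔸 := .restrictScalars ℚ ℂ 𝔸
  rw [add_smul, exp_add_of_commute (((Commute.refl a).smul_left v).smul_right w)]

@[fun_prop]
theorem Differentiable.exp_smul {g : ℂ → ℂ} (hg : Differentiable ℂ g) (a : 𝔸) :
    Differentiable ℂ fun z => NormedSpace.exp (g z • a) :=
  fun z => (hasDerivAt_exp_smul_const a (g z)).differentiableAt.comp z (hg z)

end BanachAlgebra

section CStarAlgebra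

variable {A : Type*} [CStarAlgebra A]

theorem IsSelfAdjoint.star_exp_smul {a : A} (ha : IsSelfAdjoint a) (w : ℂ) :
    star (NormedSpace.exp (w • a)) = NormedSpace.exp (starRingEnd ℂ w • a) := by
  rw [star_exp, star_smul, ha.star_eq]
  rfl

theorem IsSelfAdjoint.norm_exp_smul {a : A} (ha : IsSelfAdjoint a) (w : ℂ) :
    ‖NormedSpace.exp (w • a)‖ = ‖NormedSpace.exp ((w.re : ℂ) • a)‖ := by
  let +nondep : NormedAlgebra ℚ A := .restrictScalars ℚ ℂ A
  have hskew : ((w.im : ℂ) * I) • a ∈ skewAdjoint A :=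
    ha.smul_mem_skewAdjoint (by simp [skewAdjoint.mem_iff])
  calc ‖NormedSpace.exp (w • a)‖
      = ‖NormedSpace.exp ((w.re : ℂ) • a) * NormedSpace.exp (((w.im : ℂ) * I) • a)‖ := by
        rw [← exp_add_smul, re_add_im]
    _ = _ := CStarRing.norm_mul_mem_unitary _ (exp_mem_unitary_of_mem_skewAdjoint hskew)

theorem IsSelfAdjoint.exists_norm_exp_smul_le {a : A} (ha : IsSelfAdjoint a) (s t : ℝ) :
    ∃ C, ∀ w : ℂ, s ≤ w.re → w.re ≤ t → ‖NormedSpace.exp (w • a)‖ ≤ C := by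
  let +nondep : NormedAlgebra ℚ A := .restrictScalars ℚ ℂ A
  obtain ⟨C, hC⟩ := isCompact_Icc.exists_bound_of_continuousOn
    (f := fun r : ℝ => NormedSpace.exp ((r : ℂ) • a)) (by fun_prop)
  exact ⟨C, fun w hs ht => (ha.norm_exp_smul w).trans_le (hC w.re ⟨hs, ht⟩)⟩

theorem IsSelfAdjoint.exists_norm_exp_mul_mul_exp_le {a : A} (ha : IsSelfAdjoint a) (c : A) :
    ∃ C, ∀ z : ℂ, -1 ≤ z.im → z.im ≤ 0 →
      ‖NormedSpace.exp ((1 - I * z) • a) * c * NormedSpace.exp ((I * z) • a)‖ ≤ C := by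
  obtain ⟨C, hC⟩ := ha.exists_norm_exp_smul_le 0 1
  refine ⟨C * ‖c‖ * C, fun z h₁ h₂ => ?_⟩
  have hC₀ : 0 ≤ C := (norm_nonneg _).trans (hC 0 (by simp) (by simp))
  have hre₁ : (1 - I * z).re = 1 + z.im := by simp
  have hre₂ : (I * z).re = -z.im := by simp
  calc _ ≤ ‖NormedSpace.exp ((1 - I * z) • a)‖ * ‖c‖ * ‖NormedSpace.exp ((I * z) • a)‖ :=
        norm_mul₃_le
    _ ≤ C * ‖c‖ * C := by
      gcongr
      · exact hC _ (by rw [hre₁]; linarith) (by rw [hre₁]; linarith)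
      · exact hC _ (by rw [hre₂]; linarith) (by rw [hre₂]; linarith)

theorem cfc_cpow_eq_exp_smul_cfc_log {a : A} [IsStarNormal a] (h : spectrum ℂ a ⊆ slitPlane)
    (w : ℂ) : cfc (fun z : ℂ => z ^ w) a = exp (w • cfc log a) := by
  have hlog : ContinuousOn log (spectrum ℂ a) :=
    fun z hz => (continuousAt_clog (h hz)).continuousWithinAt
  calc cfc (fun z : ℂ => z ^ w) a = cfc (Complex.exp ∘ fun z => w * log z) a :=
        cfc_congr fun z hz => by
          simp [cpow_def_of_ne_zero (slitPlane_ne_zero (h hz)), mul_comm]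
    _ = exp (w • cfc log a) := by
      rw [cfc_comp Complex.exp (fun z => w * log z) a (hg := continuous_exp.continuousOn)
        (hf := continuousOn_const.mul hlog), CFC.complex_exp_eq_normedSpace_exp,
        ← cfc_smul w _ a hlog]
      rfl

theorem isSelfAdjoint_cfc_log {a : A} (h : spectrum ℂ a ⊆ ofReal '' Set.Ici 0) :
    IsSelfAdjoint (cfc log a) := by
  rw [isSelfAdjoint_iff, ← cfc_star]
  refine cfc_congr fun z hz => ?_
  obtain ⟨r, hr, rfl⟩ := h hz
  rw [← ofReal_log hr, star_def, conj_ofReal]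

theorem IsSelfAdjoint.spectrum_subset_ofReal_Ioi {a : A} (ha : IsSelfAdjoint a)
    (hpos : ∀ r ∈ spectrum ℝ a, 0 < r) : spectrum ℂ a ⊆ ofReal '' Set.Ioi 0 := by
  rw [← ha.spectrumRestricts.algebraMap_image]
  exact Set.image_mono hpos

theorem IsSelfAdjoint.exists_isSelfAdjoint_cfc_cpow_eq_exp_smul {a : A} (ha : IsSelfAdjoint a)
    (hpos : ∀ r ∈ spectrum ℝ a, 0 < r) :
    ∃ L : A, IsSelfAdjoint L ∧ ∀ w : ℂ, cfc (fun z : ℂ => z ^ w) a = NormedSpace.exp (w • L) := by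
  have := ha.isStarNormal
  have hspec := ha.spectrum_subset_ofReal_Ioi hpos
  refine ⟨cfc log a, isSelfAdjoint_cfc_log (hspec.trans (Set.image_mono Set.Ioi_subset_Ici_self)),
    cfc_cpow_eq_exp_smul_cfc_log (hspec.trans ?_)⟩
  rintro _ ⟨r, hr, rfl⟩
  exact ofReal_mem_slitPlane.2 hr

end CStarAlgebra

section Hilbert

variable {H : Type*} [NormedAddCommGroup H] [InnerProductSpace ℂ H] [CompleteSpace H]
  {L : H →L[ℂ] H}

theorem IsSelfAdjoint.inner_exp_smul_apply_left (hL : IsSelfAdjoint L) (w : ℂ) (u v : H) :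
    inner ℂ (NormedSpace.exp (w • L) u) v =
      inner ℂ u (NormedSpace.exp (starRingEnd ℂ w • L) v) := by
  rw [← ContinuousLinearMap.adjoint_inner_right, ← ContinuousLinearMap.star_eq_adjoint,
    hL.star_exp_smul]

theorem IsSelfAdjoint.inner_exp_smul_conj_sub_I (hL : IsSelfAdjoint L) (c : H →L[ℂ] H)
    (z : ℂ) (x y : H) :
    inner ℂ (NormedSpace.exp ((I * (starRingEnd ℂ z - I)) • L) x)
        (c (NormedSpace.exp ((I * z) • L) y)) =
      inner ℂ x ((NormedSpace.exp ((1 - I * z) • L) * c * NormedSpace.exp ((I * z) • L)) y) := by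
  have hconj : starRingEnd ℂ (I * (starRingEnd ℂ z - I)) = 1 - I * z := by
    rw [map_mul, map_sub, conj_conj, conj_I]
    linear_combination (-1 : ℂ) * I_mul_I
  rw [hL.inner_exp_smul_apply_left, hconj]
  rfl

end Hilbert

theorem stmt3 {H : Type*} [NormedAddCommGroup H] [InnerProductSpace ℂ H]
    [CompleteSpace H]
    (Q b : H →L[ℂ] H) (hQ : IsSelfAdjoint Q)
    (hpos : ∀ r ∈ spectrum ℝ Q, 0 < r)
    (x y : H)
    (Qc : ℂ → H →L[ℂ] H) (hQc : Qc = fun w => cfc (fun r : ℂ => r ^ w) Q)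
    (f : ℂ → ℂ)
    (hf : f = fun z =>
      inner (𝕜 := ℂ) (Qc (Complex.I * ((starRingEnd ℂ) z - Complex.I)) x)
        ((ContinuousLinearMap.adjoint b) (Qc (Complex.I * z) y))) :
    (∃ C : ℝ, ∀ z : ℂ, -1 ≤ z.im → z.im ≤ 0 → ‖f z‖ ≤ C) ∧
    ContinuousOn f {z : ℂ | -1 ≤ z.im ∧ z.im ≤ 0} ∧
    DifferentiableOn ℂ f {z : ℂ | -1 < z.im ∧ z.im < 0} ∧
    (∀ t : ℝ, f t =
      inner (𝕜 := ℂ) (Q x)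
        (Qc (-(Complex.I * t)) ((ContinuousLinearMap.adjoint b) (Qc (Complex.I * t) y)))) ∧
    (∀ t : ℝ, f ((t : ℂ) - Complex.I) =
      inner (𝕜 := ℂ) x
        (Qc (-(Complex.I * t)) ((ContinuousLinearMap.adjoint b) (Qc (Complex.I * t) (Q y))))) := by
  obtain ⟨L, hL, hpow⟩ := hQ.exists_isSelfAdjoint_cfc_cpow_eq_exp_smul hpos
  have hP : Qc = fun w => NormedSpace.exp (w • L) := hQc.trans (funext hpow)
  have hP1 : Qc 1 = Q := by simp [hQc, cfc_id' ℂ Q]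
  have hadd (v w : ℂ) : Qc (v + w) = Qc v * Qc w := by simp only [hP, exp_add_smul]
  have hadj (w : ℂ) (u v : H) : inner ℂ (Qc w u) v = inner ℂ u (Qc (starRingEnd ℂ w) v) := by
    simp only [hP, hL.inner_exp_smul_apply_left]
  have hI_sub (w : ℂ) : I * (w - I) = I * w + 1 := by rw [mul_sub, I_mul_I, sub_neg_eq_add]
  set F := fun z : ℂ => NormedSpace.exp ((1 - I * z) • L) * ContinuousLinearMap.adjoint b *
    NormedSpace.exp ((I * z) • L)
  have hfF : f = fun z => inner ℂ x (F z y) := by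
    simp only [hf, hP, hL.inner_exp_smul_conj_sub_I, F]
  have hdiff : Differentiable ℂ f := hfF ▸ (innerSL ℂ x).differentiable.comp (by fun_prop)
  obtain ⟨C, hC⟩ := hL.exists_norm_exp_mul_mul_exp_le (ContinuousLinearMap.adjoint b)
  refine ⟨⟨‖x‖ * (C * ‖y‖), fun z h₁ h₂ => ?_⟩, hdiff.continuous.continuousOn,
    hdiff.differentiableOn, fun t => ?_, fun t => ?_⟩
  · calc ‖f z‖ ≤ ‖x‖ * ‖F z y‖ := hfF ▸ norm_inner_le_norm _ _
      _ ≤ ‖x‖ * (C * ‖y‖) := by gcongr; exact (F z).le_of_opNorm_le (hC z h₁ h₂) y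
  · simp only [hf]
    rw [conj_ofReal, hI_sub, hadd, hP1, mul_apply_eq_comp, hadj, map_mul, conj_I, conj_ofReal,
      neg_mul]
  · have h : I * (starRingEnd ℂ ((t : ℂ) - I) - I) = I * t := by
      rw [map_sub, conj_ofReal, conj_I]; ring
    simp only [hf]
    rw [h, hI_sub, hadd, hP1, mul_apply_eq_comp, hadj, map_mul, conj_I, conj_ofReal, neg_mul]
end

section
/- Contravariance of duality with respect to composition of concrete bicharacters: with V^{C→A} ∈ U(H_C⊗H_A), V^{A→B} ∈ U(H_A⊗H_B) concrete bicharacters and V^{C→B} their composition determined by V^{C→B}₁₃ = (V^{C→A}₁₂)* V^{A→B}₂₃ V^{C→A}₁₂ (V^{A→B}₂₃)*, the duals V̂^{X→Y} := ΣV^{X→Y*}Σ satisfy the identity (V^{C→B})^∧₁₃ = (V̂^{A→B}₁₂)* V̂^{C→A}₂₃ V̂^{A→B}₁₂ (V̂^{C→A}₂₃)*, i.e. the dual of the composition is the composition of the duals in reversed order. -/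
theorem eq_inv_mul_mul_mul_inv_of_mul_eq_mul_mul {G : Type*} [Group G] {a b c : G}
    (h : b * a = a * c * b) : c = a⁻¹ * b * a * b⁻¹ := by
  rw [mul_assoc a⁻¹, h]; group

theorem stmt7 {G G' : Type*} [Group G] [Group G']
    (VCA12 VAB23 VCB13 : G)
    (hcomp : VAB23 * VCA12 = VCA12 * VCB13 * VAB23)
    (φ : G ≃* G')
    (VhCA23 VhAB12 VhCB13 : G')
    (hCA : φ VCA12 = VhCA23⁻¹) (hAB : φ VAB23 = VhAB12⁻¹)
    (hCB : φ VCB13 = VhCB13⁻¹) :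
    VhCB13 = VhAB12⁻¹ * VhCA23 * VhAB12 * VhCA23⁻¹ := by
  have hVCB := congrArg φ (eq_inv_mul_mul_mul_inv_of_mul_eq_mul_mul hcomp)
  simp only [map_mul, map_inv, hCA, hAB, hCB, inv_inv] at hVCB
  -- `g ↦ (φ g)⁻¹` is an anti-homomorphism, so inverting reverses the order of the factors.
  rw [← inv_inv VhCB13, hVCB]
  group
end

section
/- Associativity of composition of concrete bicharacters: let V¹ ∈ U(H₁⊗H₂), V² ∈ U(H₂⊗H₃), V³ ∈ U(H₃⊗H₄) be unitaries, and suppose there exist unitaries V²¹ ∈ U(H₁⊗H₃), V³² ∈ U(H₂⊗H₄), A ∈ U(H₁⊗H₄), B ∈ U(H₁⊗H₄) satisfying V²₂₃V¹₁₂ = V¹₁₂V²¹₁₃V²₂₃ (on H₁⊗H₂⊗H₃), V³₃₄V²₂₃ = V²₂₃V³²₂₄V³₃₄ (on H₂⊗H₃⊗H₄), V³₂₃V²¹₁₂ = V²¹₁₂A₁₃V³₂₃ (on H₁⊗H₃⊗H₄), and V³²₂₃V¹₁₂ = V¹₁₂B₁₃V³²₂₃ (on H₁⊗H₂⊗H₄).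 Then A = B. -/
/-!
Expand `V3 * V2 * V1` in two ways, moving operators on disjoint legs past each other
(`c13`, `cA2`). Composing `V2 * V1` first (through `h1`, then `h3`) yields
`V1 * V21 * V2 * A * V32 * V3`; composing `V3 * V2` first (through `h2`, then `h4`) yields the
same word with `B` in place of `A`. Cancelling the common outer factors gives `A = B`.
-/

section

variable {G : Type*} [Group G] {V1 V2 V3 V21 V32 A B : G}

theorem triple_mul_eq_via_inner_comp (h1 : V2 * V1 = V1 * V21 * V2)
    (h2 : V3 * V2 = V2 * V32 * V3) (h3 : V3 * V21 = V21 * A * V3)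
    (c13 : V1 * V3 = V3 * V1) (cA2 : A * V2 = V2 * A) :
    V3 * V2 * V1 = V1 * V21 * V2 * A * V32 * V3 :=
  calc V3 * V2 * V1 = V3 * V1 * V21 * V2 := by rw [mul_assoc, h1]; group
    _ = V1 * (V3 * V21) * V2 := by rw [← c13]; group
    _ = V1 * V21 * A * (V3 * V2) := by rw [h3]; group
    _ = V1 * V21 * (A * V2) * V32 * V3 := by rw [h2]; group
    _ = V1 * V21 * V2 * A * V32 * V3 := by rw [cA2]; group

theorem triple_mul_eq_via_outer_comp (h1 : V2 * V1 = V1 * V21 * V2)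
    (h2 : V3 * V2 = V2 * V32 * V3) (h4 : V32 * V1 = V1 * B * V32)
    (c13 : V1 * V3 = V3 * V1) :
    V3 * V2 * V1 = V1 * V21 * V2 * B * V32 * V3 :=
  calc V3 * V2 * V1 = V2 * (V32 * V1) * V3 := by rw [h2, mul_assoc _ V3, ← c13]; group
    _ = V2 * V1 * B * V32 * V3 := by rw [h4]; group
    _ = V1 * V21 * V2 * B * V32 * V3 := by rw [h1]

end

theorem stmt9_general {G : Type*} [Group G]
    (V1 V2 V3 V21 V32 A B : G)
    (h1 : V2 * V1 = V1 * V21 * V2)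
    (h2 : V3 * V2 = V2 * V32 * V3)
    (h3 : V3 * V21 = V21 * A * V3)
    (h4 : V32 * V1 = V1 * B * V32)
    (c13 : V1 * V3 = V3 * V1)
    (cA2 : A * V2 = V2 * A) :
    A = B := by
  have h := (triple_mul_eq_via_inner_comp h1 h2 h3 c13 cA2).symm.trans
    (triple_mul_eq_via_outer_comp h1 h2 h4 c13)
  simpa only [mul_left_inj, mul_right_inj] using h

theorem stmt9 {G : Type*} [Group G]
    (V1 V2 V3 V21 V32 A B : G)
    (h1 : V2 * V1 = V1 * V21 * V2)
    (h2 : V3 * V2 = V2 * V32 * V3)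
    (h3 : V3 * V21 = V21 * A * V3)
    (h4 : V32 * V1 = V1 * B * V32)
    (c13 : V1 * V3 = V3 * V1)
    (cA2 : A * V2 = V2 * A)
    (cB2 : B * V2 = V2 * B) :
    A = B :=
  stmt9_general V1 V2 V3 V21 V32 A B h1 h2 h3 h4 c13 cA2
end
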